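/- arXiv:1909.13709 — 2 statements merged into one kernel-verified Lean document; each statement's English description precedes it below -/
import Mathlib

section
/- Define Δ₂(E,D) = −D·Δ(E) − (D·Δ(E))ᵀ − (E − Δ(E))ᵀ D (E − Δ(E)). If ‖E‖₂ < 1 and D is any matrix, then ‖Δ₂(E,D)‖₂ ≤ (3 − 2‖E‖₂)·‖E‖₂²·‖D‖₂ / (1 − ‖E‖₂)². -/
open Matrix

noncomputable def sn {n : Type*} [Fintype n] [DecidableEq n] (M : Matrix n n ℝ) : ℝ :=
  ‖Matrix.toEuclideanCLM (𝕜 := ℝ) (n := n) M‖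

noncomputable def Delta {n : Type*} [Fintype n] [DecidableEq n] (E : Matrix n n ℝ) : Matrix n n ℝ :=
  (1 + E)⁻¹ - 1 + E

noncomputable def Delta1 {n : Type*} [Fintype n] [DecidableEq n] (E : Matrix n n ℝ) : Matrix n n ℝ :=
  Delta E + (Delta E)ᵀ + (E - Delta E)ᵀ * (E - Delta E)

noncomputable def Delta2 {n : Type*} [Fintype n] [DecidableEq n] (E D : Matrix n n ℝ) : Matrix n n ℝ :=
  -(D * Delta E) - (D * Delta E)ᵀ - (E - Delta E)ᵀ * D * (E - Delta E)

noncomputable def DDelta {n : Type*} [Fintype n] [DecidableEq n] (F H : Matrix n n ℝ) : Matrix n n ℝ :=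
  ∑' k : ℕ, ((-1 : ℝ)^(k+2)) • ∑ l ∈ Finset.range (k+2), F^l * H * F^(k+1-l)

noncomputable def frob {n : Type*} [Fintype n] (M : Matrix n n ℝ) : ℝ :=
  Real.sqrt (∑ i, ∑ j, (M i j)^2)

section aux

set_option maxHeartbeats 1000000
set_option synthInstance.maxHeartbeats 400000

variable {n : Type*} [Fintype n] [DecidableEq n]

lemma sn_nonneg (A : Matrix n n ℝ) : 0 ≤ sn A := norm_nonneg _

lemma sn_mul_le (A B : Matrix n n ℝ) : sn (A * B) ≤ sn A * sn B := by
  unfold sn; rw [_root_.map_mul]; exact norm_mul_le _ _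

lemma sn_transpose (A : Matrix n n ℝ) : sn (Aᵀ) = sn A := by
  unfold sn
  have h : (Aᵀ) = star A := rfl
  rw [h, map_star, ContinuousLinearMap.star_eq_adjoint]
  exact LinearIsometryEquiv.norm_map (ContinuousLinearMap.adjoint) _

lemma sn_neg (A : Matrix n n ℝ) : sn (-A) = sn A := by
  unfold sn; rw [map_neg, norm_neg]

lemma sn_add_le (A B : Matrix n n ℝ) : sn (A + B) ≤ sn A + sn B := by
  unfold sn; rw [map_add]; exact norm_add_le _ _

lemma sn_sub_le (A B : Matrix n n ℝ) : sn (A - B) ≤ sn A + sn B := by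
  rw [sub_eq_add_neg]
  exact (sn_add_le _ _).trans (by rw [sn_neg])

lemma delta_key (E : Matrix n n ℝ) (hE : sn E < 1) :
    sn (Delta E) ≤ sn E ^ 2 / (1 - sn E) := by
  set A := Matrix.toEuclideanCLM (𝕜 := ℝ) (n := n) E with hA
  have hA1 : ‖A‖ < 1 := hE
  have hA0 : 0 ≤ ‖A‖ := norm_nonneg _
  have hpos : (0:ℝ) < 1 - ‖A‖ := by linarith
  have hu : IsUnit ((1 : EuclideanSpace ℝ n →L[ℝ] EuclideanSpace ℝ n) + A) := by
    have := (Units.oneSub (-A) (by simpa using hA1)).isUnit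
    simpa [sub_neg_eq_add] using this
  have huE : IsUnit (1 + E) := by
    have h0 : IsUnit (Matrix.toEuclideanCLM (𝕜 := ℝ) (n := n) (1 + E)) := by
      rw [map_add, _root_.map_one]; exact hu
    have h1 := h0.map (Matrix.toEuclideanCLM (𝕜 := ℝ) (n := n)).symm.toRingEquiv.toMonoidHom
    have h2 : (Matrix.toEuclideanCLM (𝕜 := ℝ) (n := n)).symm
        ((Matrix.toEuclideanCLM (𝕜 := ℝ) (n := n)) (1 + E)) = 1 + E :=
      StarAlgEquiv.symm_apply_apply _ _
    exact h2 ▸ (show IsUnit ((Matrix.toEuclideanCLM (𝕜 := ℝ) (n := n)).symm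
      ((Matrix.toEuclideanCLM (𝕜 := ℝ) (n := n)) (1 + E))) from h1)
  have hdet : IsUnit (1 + E).det := (Matrix.isUnit_iff_isUnit_det _).mp huE
  set C := Matrix.toEuclideanCLM (𝕜 := ℝ) (n := n) ((1 + E)⁻¹) with hC
  have h1 : (1 + A) * C = 1 := by
    rw [hC, hA]
    rw [show (1 : EuclideanSpace ℝ n →L[ℝ] EuclideanSpace ℝ n) +
        Matrix.toEuclideanCLM (𝕜 := ℝ) (n := n) E =
        Matrix.toEuclideanCLM (𝕜 := ℝ) (n := n) (1 + E) by rw [map_add, _root_.map_one]]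
    rw [← _root_.map_mul, Matrix.mul_nonsing_inv _ hdet, _root_.map_one]
  have hCeq : C = 1 - A * C := by
    have h2 : C + A * C = 1 := by rw [← one_mul C, ← mul_assoc, mul_one, ← add_mul]; exact h1
    linear_combination (norm := noncomm_ring) h2
  have hCnorm : ‖C‖ ≤ 1 / (1 - ‖A‖) := by
    have h2 : ‖C‖ ≤ 1 + ‖A‖ * ‖C‖ := by
      calc ‖C‖ = ‖1 - A * C‖ := by rw [← hCeq]
        _ ≤ ‖(1 : EuclideanSpace ℝ n →L[ℝ] EuclideanSpace ℝ n)‖ + ‖A * C‖ := norm_sub_le _ _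
        _ ≤ 1 + ‖A‖ * ‖C‖ := by
            gcongr
            · simpa [ContinuousLinearMap.one_def] using
                ContinuousLinearMap.norm_id_le (E := EuclideanSpace ℝ n)
            · exact norm_mul_le _ _
    rw [le_div_iff₀ hpos]
    nlinarith
  have hd : Matrix.toEuclideanCLM (𝕜 := ℝ) (n := n) (Delta E) = A * (A * C) := by
    have h3 : (1 : EuclideanSpace ℝ n →L[ℝ] EuclideanSpace ℝ n) - C = A * C := by
      linear_combination (norm := noncomm_ring) -hCeq
    have : Matrix.toEuclideanCLM (𝕜 := ℝ) (n := n) (Delta E) = C - 1 + A := by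
      unfold Delta
      rw [map_add, map_sub, _root_.map_one]
    rw [this]
    calc C - 1 + A = A - (1 - C) := by abel
      _ = A - A * C := by rw [h3]
      _ = A * (1 - C) := by rw [mul_sub, mul_one]
      _ = A * (A * C) := by rw [h3]
  have : sn (Delta E) ≤ ‖A‖ * (‖A‖ * ‖C‖) := by
    unfold sn
    rw [hd]
    calc ‖A * (A * C)‖ ≤ ‖A‖ * ‖A * C‖ := norm_mul_le _ _
      _ ≤ ‖A‖ * (‖A‖ * ‖C‖) := by gcongr; exact norm_mul_le _ _
  refine this.trans ?_
  have hsn : sn E = ‖A‖ := rfl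
  rw [hsn]
  calc ‖A‖ * (‖A‖ * ‖C‖) = ‖A‖ ^ 2 * ‖C‖ := by ring
    _ ≤ ‖A‖ ^ 2 * (1 / (1 - ‖A‖)) :=
        mul_le_mul_of_nonneg_left hCnorm (by positivity)
    _ = ‖A‖ ^ 2 / (1 - ‖A‖) := by rw [mul_one_div]

end aux

theorem stmt6 {n : Type*} [Fintype n] [DecidableEq n] (E D : Matrix n n ℝ) (hE : sn E < 1) :
    sn (Delta2 E D) ≤ (3 - 2 * sn E) * sn E ^ 2 * sn D / (1 - sn E)^2 := by
  set a := sn E with ha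
  set d := sn D with hd
  set s := sn (Delta E) with hs
  set t := sn (E - Delta E) with ht
  have ha0 : 0 ≤ a := sn_nonneg _
  have hd0 : 0 ≤ d := sn_nonneg _
  have hs0 : 0 ≤ s := sn_nonneg _
  have ht0 : 0 ≤ t := sn_nonneg _
  have hpos : (0:ℝ) < 1 - a := by linarith
  have hskey : s ≤ a ^ 2 / (1 - a) := delta_key E hE
  have h1 : s * (1 - a) ≤ a ^ 2 := by
    rw [div_eq_mul_one_div] at hskey
    calc s * (1 - a) ≤ (a^2 * (1/(1-a))) * (1 - a) := by gcongr
      _ = a ^ 2 := by field_simp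
  have htle : t ≤ a + s := sn_sub_le _ _
  have h2 : t * (1 - a) ≤ a := by nlinarith
  -- bound sn (Delta2 E D)
  have hX : sn (D * Delta E) ≤ d * s := sn_mul_le _ _
  have hY : sn ((E - Delta E)ᵀ * D * (E - Delta E)) ≤ t * d * t := by
    calc sn ((E - Delta E)ᵀ * D * (E - Delta E))
        ≤ sn ((E - Delta E)ᵀ * D) * t := sn_mul_le _ _
      _ ≤ (sn ((E - Delta E)ᵀ) * d) * t := by gcongr; exact sn_mul_le _ _
      _ = t * d * t := by rw [sn_transpose]
  have hmain : sn (Delta2 E D) ≤ d * s + d * s + t * d * t := by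
    unfold Delta2
    calc sn (-(D * Delta E) - (D * Delta E)ᵀ - (E - Delta E)ᵀ * D * (E - Delta E))
        ≤ sn (-(D * Delta E) - (D * Delta E)ᵀ) + sn ((E - Delta E)ᵀ * D * (E - Delta E)) :=
          sn_sub_le _ _
      _ ≤ (sn (-(D * Delta E)) + sn ((D * Delta E)ᵀ)) + sn ((E - Delta E)ᵀ * D * (E - Delta E)) := by
          gcongr; exact sn_sub_le _ _
      _ = (sn (D * Delta E) + sn (D * Delta E)) + sn ((E - Delta E)ᵀ * D * (E - Delta E)) := by
          rw [sn_neg, sn_transpose]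
      _ ≤ d * s + d * s + t * d * t := by gcongr
  refine hmain.trans ?_
  rw [le_div_iff₀ (by positivity)]
  nlinarith [mul_nonneg (mul_nonneg hd0 (sub_nonneg.2 h2))
      (add_nonneg ha0 (mul_nonneg ht0 hpos.le)),
    mul_nonneg (mul_nonneg hd0 (sub_nonneg.2 h1)) hpos.le]
end

section
/- If ‖F‖₂ < 1/10, then the Fréchet derivative of Δ₁ at F in direction H satisfies ‖DΔ₁(F)[H]‖₂ ≤ 9‖F‖₂·‖H‖₂, where DΔ₁(F)[H] = DΔ(F)[H] + (DΔ(F)[H])ᵀ + (H − DΔ(F)[H])ᵀ(F − Δ(F)) + (F − Δ(F))ᵀ(H − DΔ(F)[H]). -/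
open Matrix

/-!
With `B = (1 + F)⁻¹` one has `F - Δ(F) = B F` and `B F = F - (B F) F`, so
`‖F - Δ(F)‖ ≤ ‖F‖ / (1 - ‖F‖)`. The `k`-th term of the series `DΔ(F)[H]` is a sum of `k + 2` words
of norm at most `‖F‖ ^ (k + 1) ‖H‖`, so `‖DΔ(F)[H]‖ ≤ ‖F‖ ‖H‖ ∑ (k + 2) ‖F‖ ^ k
= (2 - ‖F‖) / (1 - ‖F‖) ^ 2 ‖F‖ ‖H‖`. Both estimates hold in any normed ring. On real matrices the
transpose is the star of the C⋆-norm, hence an isometry, and the triangle inequality with the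
bounds `3 ‖F‖ ‖H‖` and `(10 / 9) ‖F‖` at `‖F‖ < 1 / 10` gives `6 + (20 / 9) (1 + 3 / 10) < 9`.
-/

open Finset

theorem hasSum_add_two_mul_geometric {r : ℝ} (hr₀ : 0 ≤ r) (hr₁ : r < 1) :
    HasSum (fun k : ℕ => ((k : ℝ) + 2) * r ^ k) ((2 - r) / (1 - r) ^ 2) := by
  have hr : ‖r‖ < 1 := by rwa [Real.norm_of_nonneg hr₀]
  have hne : 1 - r ≠ 0 := by linarith
  have hsplit : (fun k : ℕ => ((k : ℝ) + 2) * r ^ k)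
      = fun k : ℕ => (k : ℝ) * r ^ k + 2 * r ^ k := by
    funext k; ring
  rw [hsplit, show (2 - r) / (1 - r) ^ 2 = r / (1 - r) ^ 2 + 2 * (1 - r)⁻¹ by field_simp; ring]
  exact (hasSum_coe_mul_geometric_of_norm_lt_one hr).add
    ((hasSum_geometric_of_lt_one hr₀ hr₁).mul_left 2)

section NormedRing

variable {R : Type*} [NormedRing R]

theorem norm_pow_mul_mul_pow_le (x h : R) (l m : ℕ) :
    ‖x ^ l * h * x ^ m‖ ≤ ‖x‖ ^ (l + m) * ‖h‖ := by
  rcases l.eq_zero_or_pos with rfl | hl <;> rcases m.eq_zero_or_pos with rfl | hm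
  · simp
  · simpa [mul_comm] using (norm_mul_le h (x ^ m)).trans
      (mul_le_mul_of_nonneg_left (norm_pow_le' x hm) (norm_nonneg h))
  · simpa using (norm_mul_le (x ^ l) h).trans
      (mul_le_mul_of_nonneg_right (norm_pow_le' x hl) (norm_nonneg h))
  · calc ‖x ^ l * h * x ^ m‖ ≤ ‖x ^ l‖ * ‖h‖ * ‖x ^ m‖ := norm_mul₃_le
      _ ≤ ‖x‖ ^ l * ‖h‖ * ‖x‖ ^ m := by gcongr <;> exact norm_pow_le' x ‹_›
      _ = ‖x‖ ^ (l + m) * ‖h‖ := by ring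

theorem norm_mul_le_of_mul_one_add_eq_one {b x : R} (hb : b * (1 + x) = 1) (hx : ‖x‖ < 1) :
    ‖b * x‖ ≤ ‖x‖ / (1 - ‖x‖) := by
  have hbx : b * x = x - b * x * x := by
    rw [mul_add, mul_one] at hb
    calc b * x = (b + b * x) * x - b * x * x := by noncomm_ring
      _ = x - b * x * x := by rw [hb, one_mul]
  have : ‖b * x‖ ≤ ‖x‖ + ‖b * x‖ * ‖x‖ :=
    calc ‖b * x‖ = ‖x - b * x * x‖ := by rw [← hbx]
      _ ≤ ‖x‖ + ‖b * x * x‖ := norm_sub_le _ _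
      _ ≤ ‖x‖ + ‖b * x‖ * ‖x‖ := by gcongr; exact norm_mul_le _ _
  rw [le_div_iff₀ (by linarith)]
  linarith

theorem norm_sum_pow_mul_mul_pow_le (x h : R) (k : ℕ) :
    ‖∑ l ∈ range (k + 1), x ^ l * h * x ^ (k - l)‖ ≤ (k + 1) * ‖x‖ ^ k * ‖h‖ := by
  calc ‖∑ l ∈ range (k + 1), x ^ l * h * x ^ (k - l)‖
      ≤ ∑ l ∈ range (k + 1), ‖x ^ l * h * x ^ (k - l)‖ := norm_sum_le _ _
    _ ≤ ∑ l ∈ range (k + 1), ‖x‖ ^ k * ‖h‖ := by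
        refine sum_le_sum fun l hl => ?_
        refine (norm_pow_mul_mul_pow_le x h l (k - l)).trans_eq ?_
        rw [Nat.add_sub_cancel' (Nat.lt_succ_iff.mp (mem_range.mp hl))]
    _ = (k + 1) * ‖x‖ ^ k * ‖h‖ := by
        rw [sum_const, card_range, nsmul_eq_mul]; push_cast; ring

variable [NormedSpace ℝ R]

theorem norm_tsum_neg_one_pow_smul_sum_pow_mul_mul_pow_le {x : R} (hx : ‖x‖ < 1) (h : R) :
    ‖∑' k : ℕ, ((-1 : ℝ) ^ (k + 2)) • ∑ l ∈ range (k + 2), x ^ l * h * x ^ (k + 1 - l)‖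
      ≤ (2 - ‖x‖) / (1 - ‖x‖) ^ 2 * ‖x‖ * ‖h‖ := by
  have hterm : ∀ k : ℕ,
      ‖((-1 : ℝ) ^ (k + 2)) • ∑ l ∈ range (k + 2), x ^ l * h * x ^ (k + 1 - l)‖
        ≤ ‖x‖ * ‖h‖ * (((k : ℝ) + 2) * ‖x‖ ^ k) := by
    intro k
    rw [norm_smul, norm_pow, norm_neg, norm_one, one_pow, one_mul]
    calc _ ≤ ((k + 1 : ℕ) + 1) * ‖x‖ ^ (k + 1) * ‖h‖ := norm_sum_pow_mul_mul_pow_le x h (k + 1)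
      _ = ‖x‖ * ‖h‖ * (((k : ℝ) + 2) * ‖x‖ ^ k) := by push_cast; ring
  calc _ ≤ ‖x‖ * ‖h‖ * ((2 - ‖x‖) / (1 - ‖x‖) ^ 2) :=
        tsum_of_norm_bounded ((hasSum_add_two_mul_geometric (norm_nonneg x) hx).mul_left _) hterm
    _ = (2 - ‖x‖) / (1 - ‖x‖) ^ 2 * ‖x‖ * ‖h‖ := by ring

end NormedRing

theorem norm_add_star_add_star_sub_mul_add_star_mul_sub_le {R : Type*} [NormedRing R] [StarRing R]
    [NormedStarGroup R] {d t h : R} {a : ℝ} (ha : a < 1 / 10) (hd : ‖d‖ ≤ 3 * a * ‖h‖)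
    (ht : ‖t‖ ≤ 10 / 9 * a) :
    ‖d + star d + star (h - d) * t + star t * (h - d)‖ ≤ 9 * a * ‖h‖ := by
  have hcross₁ : ‖star (h - d) * t‖ ≤ (‖h‖ + ‖d‖) * ‖t‖ :=
    (norm_mul_le _ _).trans (by rw [norm_star]; gcongr; exact norm_sub_le h d)
  have hcross₂ : ‖star t * (h - d)‖ ≤ ‖t‖ * (‖h‖ + ‖d‖) :=
    (norm_mul_le _ _).trans (by rw [norm_star]; gcongr; exact norm_sub_le h d)
  have hsum : ‖d + star d + star (h - d) * t + star t * (h - d)‖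
      ≤ ‖d‖ + ‖star d‖ + ‖star (h - d) * t‖ + ‖star t * (h - d)‖ := norm_add₄_le
  rw [norm_star] at hsum
  have ht₀ := norm_nonneg t
  have hh₀ := norm_nonneg h
  have hd₀ := norm_nonneg d
  have ha₀ : 0 ≤ a := by linarith
  nlinarith [mul_le_mul hd ht ht₀ (by positivity), mul_le_mul_of_nonneg_left ht hh₀]

open scoped Matrix.Norms.L2Operator

namespace Matrix

variable {n : Type*} [Fintype n] [DecidableEq n]

theorem sn_eq_norm (M : Matrix n n ℝ) : sn M = ‖M‖ := rfl

theorem sub_Delta_eq_inv_mul {F : Matrix n n ℝ} (hF : IsUnit (1 + F)) :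
    F - Delta F = (1 + F)⁻¹ * F := by
  have hinv : (1 + F)⁻¹ * (1 + F) = 1 := nonsing_inv_mul _ ((isUnit_iff_isUnit_det _).mp hF)
  calc F - Delta F = 1 - (1 + F)⁻¹ := by rw [Delta]; abel
    _ = (1 + F)⁻¹ * (1 + F) - (1 + F)⁻¹ := by rw [hinv]
    _ = (1 + F)⁻¹ * F := by noncomm_ring

theorem norm_sub_Delta_le {F : Matrix n n ℝ} (hF : ‖F‖ < 1) :
    ‖F - Delta F‖ ≤ ‖F‖ / (1 - ‖F‖) := by
  have hunit : IsUnit (1 + F) :=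
    sub_neg_eq_add 1 F ▸ isUnit_one_sub_of_norm_lt_one (by rwa [norm_neg])
  rw [sub_Delta_eq_inv_mul hunit]
  exact norm_mul_le_of_mul_one_add_eq_one
    (nonsing_inv_mul _ ((isUnit_iff_isUnit_det _).mp hunit)) hF

theorem norm_DDelta_le {F : Matrix n n ℝ} (hF : ‖F‖ < 1) (H : Matrix n n ℝ) :
    ‖DDelta F H‖ ≤ (2 - ‖F‖) / (1 - ‖F‖) ^ 2 * ‖F‖ * ‖H‖ :=
  norm_tsum_neg_one_pow_smul_sum_pow_mul_mul_pow_le hF H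

end Matrix

theorem stmt10 {n : Type*} [Fintype n] [DecidableEq n] (F H : Matrix n n ℝ) (hF : sn F < 1/10) :
    sn (DDelta F H + (DDelta F H)ᵀ + (H - DDelta F H)ᵀ * (F - Delta F)
        + (F - Delta F)ᵀ * (H - DDelta F H)) ≤ 9 * sn F * sn H := by
  simp only [Matrix.sn_eq_norm] at hF ⊢
  have hF₀ : 0 ≤ ‖F‖ := norm_nonneg F
  have hF₁ : ‖F‖ < 1 := by linarith
  have hD : ‖DDelta F H‖ ≤ 3 * ‖F‖ * ‖H‖ := by
    refine (Matrix.norm_DDelta_le hF₁ H).trans ?_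
    have : (2 - ‖F‖) / (1 - ‖F‖) ^ 2 ≤ 3 := by
      rw [div_le_iff₀ (by nlinarith)]; nlinarith
    gcongr
  have hT : ‖F - Delta F‖ ≤ 10 / 9 * ‖F‖ := by
    refine (Matrix.norm_sub_Delta_le hF₁).trans ?_
    rw [div_le_iff₀ (by linarith)]; nlinarith
  simp only [← conjTranspose_eq_transpose_of_trivial, ← star_eq_conjTranspose]
  exact norm_add_star_add_star_sub_mul_add_star_mul_sub_le hF hD hT
end
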